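/- Suppose the Proportional Fair assignment x^PF (for each RU i and block k, x^PF assigns block k to a user j maximizing γ_{ijk}/R_{ij}) together with the full rates y_{ijk} = γ_{ijk} x^PF_{ijk} satisfies all capacity constraints Σ_{jk} y_{ijk} ≤ C_i and Σ_{ijk} y_{ijk} ≤ C. Then (x^PF, y) is an optimal solution to the single-shot problem. -/
import Mathlib


variable {ι υ κ : Type*}

section
variable [Fintype ι] [Fintype υ] [Fintype κ]

/-- Feasibility for the general single-shot problem with per-RU capacities `Ci`
and total capacity `C`. -/
def Feasible (γ : ι → υ → κ → ℝ) (Ci : ι → ℝ) (C : ℝ)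
    (x : ι → υ → κ → Bool) (y : ι → υ → κ → ℝ) : Prop :=
  (∀ i k, ∀ j j' : υ, x i j k = true → x i j' k = true → j = j') ∧
  (∀ i j k, 0 ≤ y i j k ∧ y i j k ≤ γ i j k * (if x i j k then 1 else 0)) ∧
  (∀ i : ι, (∑ j, ∑ k, y i j k) ≤ Ci i) ∧
  (∑ i, ∑ j, ∑ k, y i j k) ≤ C

/-- If the Proportional Fair assignment with full rates `y = γ · x` satisfies all
capacity constraints, then it is optimal for the single-shot problem. -/
theorem pf_optimal_if_capacity_respected
    (R : ι → υ → ℝ) (hR : ∀ i j, 0 < R i j)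
    (γ : ι → υ → κ → ℝ) (hγ : ∀ i j k, 0 ≤ γ i j k)
    (Ci : ι → ℝ) (C : ℝ)
    (xPF : ι → υ → κ → Bool) (y : ι → υ → κ → ℝ)
    (hassigned : ∀ i k, ∃ j, xPF i j k = true)
    (hPF : ∀ i j k, xPF i j k = true →
      ∀ j' : υ, γ i j' k / R i j' ≤ γ i j k / R i j)
    (hy : ∀ i j k, y i j k = γ i j k * (if xPF i j k then 1 else 0))
    (hfeas : Feasible γ Ci C xPF y) :
    ∀ x' y', Feasible γ Ci C x' y' →
      (∑ i, ∑ j, ∑ k, y' i j k / R i j) ≤ ∑ i, ∑ j, ∑ k, y i j k / R i j := by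

  intro x' y' hfeas'
  obtain ⟨hu', hb', -, -⟩ := hfeas'
  obtain ⟨hu, -, -, -⟩ := hfeas
  have key : ∀ i k, (∑ j, y' i j k / R i j) ≤ ∑ j, y i j k / R i j := by
    intro i k
    obtain ⟨j0, hj0⟩ := hassigned i k
    set t := γ i j0 k / R i j0 with ht
    have ht0 : 0 ≤ t := div_nonneg (hγ i j0 k) (hR i j0).le
    have hrhs : (∑ j, y i j k / R i j) = t := by
      rw [Finset.sum_eq_single j0]
      · rw [hy, hj0]; simp [ht]
      · intro j _ hj
        rw [hy]
        cases h : xPF i j k with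
        | false => simp
        | true => exact absurd (hu i k j j0 h hj0) hj
      · intro h; exact absurd (Finset.mem_univ j0) h
    rw [hrhs]
    have hstep : ∀ j ∈ Finset.univ, y' i j k / R i j ≤ if x' i j k then t else 0 := by
      intro j _
      cases h : x' i j k with
      | true =>
        simp only [if_pos]
        have h1 : y' i j k ≤ γ i j k := by
          have := (hb' i j k).2; rwa [h, if_pos rfl, mul_one] at this
        calc y' i j k / R i j ≤ γ i j k / R i j :=
              by gcongr; exact (hR i j).le
          _ ≤ t := hPF i j0 k hj0 j
      | false =>
        rw [if_neg (by simp [h])]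
        have h2 : y' i j k ≤ 0 := by
          have := (hb' i j k).2; rwa [h, if_neg (by simp), mul_zero] at this
        exact div_nonpos_of_nonpos_of_nonneg h2 (hR i j).le
    refine (Finset.sum_le_sum hstep).trans ?_
    by_cases hex : ∃ j1, x' i j1 k = true
    · obtain ⟨j1, hj1⟩ := hex
      rw [Finset.sum_eq_single j1]
      · rw [if_pos hj1]
      · intro j _ hj
        cases h : x' i j k with
        | false => simp
        | true => exact absurd (hu' i k j j1 h hj1) hj
      · intro h; exact absurd (Finset.mem_univ j1) h
    · push_neg at hex
      have : ∀ j, x' i j k = false := fun j => Bool.eq_false_iff.mpr (by simpa using hex j)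
      simp only [this, if_neg Bool.false_ne_true, Finset.sum_const_zero]
      exact ht0
  refine Finset.sum_le_sum fun i _ => ?_
  rw [Finset.sum_comm (f := fun j k => y' i j k / R i j),
      Finset.sum_comm (f := fun j k => y i j k / R i j)]
  exact Finset.sum_le_sum fun k _ => key i k
end
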